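/- arXiv:2203.04611 — 6 statements merged into one kernel-verified Lean document; each statement's English description precedes it below -/
import Mathlib

section
/- Let a ∈ (0,1), b ∈ [0,1], c ≥ 0, h > 0, L > 0, and let (τ_k)_{k≥0} be integers with 0 ≤ τ_k ≤ min(k, a·k^b + c) for all k. Define γ_t = h / (L·(a·((t+c)/(1−a))^b + c + 1)) for t ≥ 0. Then for every k ≥ 0, Σ_{t=k−τ_k}^{k} γ_t ≤ h/L. -/
open Finset

noncomputable section

/-- with step-sizes `γ_t = h/(L(a((t+c)/(1-a))^b + c + 1))` and delays
`τ_k ≤ min(k, a k^b + c)`, the delay-window sums satisfy `Σ_{t=k-τ_k}^k γ_t ≤ h/L`. -/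
theorem window_sum_le
    (a b c h L : ℝ) (ha : a ∈ Set.Ioo (0 : ℝ) 1) (hb : b ∈ Set.Icc (0 : ℝ) 1)
    (hc : 0 ≤ c) (hh : 0 < h) (hL : 0 < L)
    (τ : ℕ → ℕ) (hτ : ∀ k : ℕ, (τ k : ℝ) ≤ min (k : ℝ) (a * (k : ℝ) ^ b + c))
    (γ : ℕ → ℝ)
    (hγ : ∀ t : ℕ, γ t = h / (L * (a * (((t : ℝ) + c) / (1 - a)) ^ b + c + 1))) :
    ∀ k : ℕ, ∑ t ∈ Finset.Icc (k - τ k) k, γ t ≤ h / L := by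
  obtain ⟨ha0, ha1⟩ := ha
  obtain ⟨hb0, hb1⟩ := hb
  intro k
  have h1a : (0:ℝ) < 1 - a := by linarith
  have hτk : τ k ≤ k := by
    have := (hτ k).trans (min_le_left _ _)
    exact_mod_cast this
  have hτ2 : (τ k : ℝ) ≤ a * (k : ℝ) ^ b + c := (hτ k).trans (min_le_right _ _)
  have key : ∀ t ∈ Finset.Icc (k - τ k) k, γ t ≤ h / (L * ((τ k : ℝ) + 1)) := by
    intro t ht
    rw [Finset.mem_Icc] at ht
    rw [hγ]
    have hX0 : (0:ℝ) ≤ ((t : ℝ) + c) / (1 - a) := by positivity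
    have hD : (τ k : ℝ) ≤ a * (((t : ℝ) + c) / (1 - a)) ^ b + c := by
      rcases Nat.eq_zero_or_pos k with hk | hk
      · have : τ k = 0 := by omega
        rw [this]
        push_cast
        have : (0:ℝ) ≤ a * (((t : ℝ) + c) / (1 - a)) ^ b := by positivity
        linarith
      · have hk1 : (1:ℝ) ≤ (k : ℝ) := by exact_mod_cast hk
        have hkb : (k:ℝ) ^ b ≤ (k:ℝ) := by
          calc (k:ℝ) ^ b ≤ (k:ℝ) ^ (1:ℝ) := Real.rpow_le_rpow_of_exponent_le hk1 hb1
          _ = (k:ℝ) := Real.rpow_one _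
        have htlb : (k:ℝ) - (τ k : ℝ) ≤ (t : ℝ) := by
          have : ((k - τ k : ℕ) : ℝ) ≤ (t : ℝ) := by exact_mod_cast ht.1
          rwa [Nat.cast_sub hτk] at this
        have hXk : (k:ℝ) ≤ ((t : ℝ) + c) / (1 - a) := by
          rw [le_div_iff₀ h1a]
          nlinarith [mul_le_mul_of_nonneg_left hkb ha0.le]
        have : a * (k:ℝ) ^ b ≤ a * (((t : ℝ) + c) / (1 - a)) ^ b := by
          have := Real.rpow_le_rpow (by positivity) hXk hb0
          nlinarith
        linarith
    have hpos : (0:ℝ) < a * (((t : ℝ) + c) / (1 - a)) ^ b + c + 1 := by positivity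
    gcongr
  have hsum := Finset.sum_le_sum key
  have hcard : (Finset.Icc (k - τ k) k).card = τ k + 1 := by
    rw [Nat.card_Icc]; omega
  rw [Finset.sum_const, hcard] at hsum
  refine hsum.trans (le_of_eq ?_)
  have hτpos : (0:ℝ) < (τ k : ℝ) + 1 := by positivity
  rw [nsmul_eq_mul]
  push_cast
  field_simp
end
end

section
/- Let a ∈ (0,1), b ∈ [0,1], c ≥ 0, h > 0, L > 0 and define γ_t = h / (L·(a·((t+c)/(1−a))^b + c + 1)) for t ≥ 0. Then for every integer k ≥ 1: if b ∈ [0,1), then Σ_{t=0}^{k−1} γ_t ≥ γ_0 + h·((k+c)^{1−b} − (1+c)^{1−b}) / (L·(a·(1−a)^{−b} + (c+1)^{1−b})·(1−b)); and if b = 1, then Σ_{t=0}^{k−1} γ_t ≥ γ_0 + h·ln((k+c)/(1+c)) / (L·(a/(1−a) + 1)). In particular, there is a constant C > 0 such that φ(k) ≤ C·Σ_{t=0}^{k−1} γ_t for all k ≥ 2, where φ(k) = k^{1−b} if b ∈ [0,1) and φ(k) = ln k if b = 1. -/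
open Finset

noncomputable section

/-- `φ(k) = k^(1-b)` if `b < 1` and `φ(k) = ln k` if `b = 1`. -/
def phi (b : ℝ) (k : ℕ) : ℝ := if b = 1 then Real.log k else (k : ℝ) ^ (1 - b)

/-- Bernoulli-type step bound: `(x+1)^p - x^p ≤ p * x^(p-1)` for `1 ≤ x`, `0 ≤ p ≤ 1`. -/
lemma bern_step {x p : ℝ} (hx : 1 ≤ x) (hp0 : 0 ≤ p) (hp1 : p ≤ 1) :
    (x + 1) ^ p - x ^ p ≤ p * x ^ (p - 1) := by
  have hx0 : (0:ℝ) < x := lt_of_lt_of_le one_pos hx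
  have h1 : (x + 1) ^ p = x ^ p * (1 + 1/x) ^ p := by
    rw [← Real.mul_rpow hx0.le (by positivity)]
    congr 1; field_simp
  have hs : (-1:ℝ) ≤ 1/x := by
    have : (0:ℝ) ≤ 1/x := by positivity
    linarith
  have h2 : (1 + 1/x) ^ p ≤ 1 + p * (1/x) :=
    rpow_one_add_le_one_add_mul_self hs hp0 hp1
  have h3 : x ^ p * (1 + 1/x) ^ p ≤ x ^ p * (1 + p * (1/x)) :=
    mul_le_mul_of_nonneg_left h2 (Real.rpow_nonneg hx0.le p)
  have h4 : x ^ (p - 1) = x ^ p / x := by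
    rw [Real.rpow_sub hx0, Real.rpow_one]
  have h5 : x ^ p * (1 + p * (1/x)) = x ^ p + p * (x ^ p / x) := by
    field_simp
  rw [h1, h4]
  calc x ^ p * (1 + 1/x) ^ p - x ^ p ≤ x ^ p * (1 + p * (1/x)) - x ^ p := by linarith
    _ = p * (x ^ p / x) := by rw [h5]; ring

/-- Telescoping sum over `Ico 1 k`. -/
lemma tel_sum (g : ℕ → ℝ) : ∀ k : ℕ, 1 ≤ k →
    ∑ t ∈ Finset.Ico 1 k, (g (t + 1) - g t) = g k - g 1 := by
  intro k hk
  induction k with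
  | zero => omega
  | succ n ih =>
    rcases Nat.lt_or_ge 1 (n + 1) with hn | hn
    · have hn' : 1 ≤ n := by omega
      rw [Finset.sum_Ico_succ_top hn', ih hn']
      ring
    · have : n = 0 := by omega
      subst this
      simp

/-- explicit lower bounds on `Σ_{t=0}^{k-1} γ_t` for the step-sizes
`γ_t = h/(L(a((t+c)/(1-a))^b + c + 1))`; in particular `φ(k) ≤ C Σ_{t=0}^{k-1} γ_t`
for some constant `C > 0` and all `k ≥ 2`. -/
theorem stepsize_sum_lower_bound
    (a b c h L : ℝ) (ha : a ∈ Set.Ioo (0 : ℝ) 1) (hb : b ∈ Set.Icc (0 : ℝ) 1)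
    (hc : 0 ≤ c) (hh : 0 < h) (hL : 0 < L)
    (γ : ℕ → ℝ)
    (hγ : ∀ t : ℕ, γ t = h / (L * (a * (((t : ℝ) + c) / (1 - a)) ^ b + c + 1))) :
    (b < 1 → ∀ k : ℕ, 1 ≤ k →
      γ 0 + h * (((k : ℝ) + c) ^ (1 - b) - (1 + c) ^ (1 - b)) /
          (L * (a * (1 - a) ^ (-b) + (c + 1) ^ (1 - b)) * (1 - b)) ≤
        ∑ t ∈ Finset.range k, γ t) ∧
    (b = 1 → ∀ k : ℕ, 1 ≤ k →
      γ 0 + h * Real.log (((k : ℝ) + c) / (1 + c)) / (L * (a / (1 - a) + 1)) ≤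
        ∑ t ∈ Finset.range k, γ t) ∧
    ∃ C > (0 : ℝ), ∀ k : ℕ, 2 ≤ k → phi b k ≤ C * ∑ t ∈ Finset.range k, γ t := by
  obtain ⟨ha0, ha1⟩ := ha
  obtain ⟨hb0, hb1⟩ := hb
  have h1a : (0:ℝ) < 1 - a := by linarith
  have hc1 : (0:ℝ) < c + 1 := by linarith
  -- positivity of each γ t
  have hdenpos : ∀ t : ℕ, 0 < a * (((t : ℝ) + c) / (1 - a)) ^ b + c + 1 := by
    intro t
    have : 0 ≤ a * (((t : ℝ) + c) / (1 - a)) ^ b :=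
      mul_nonneg ha0.le (Real.rpow_nonneg (by positivity) b)
    linarith
  have hγpos : ∀ t : ℕ, 0 < γ t := by
    intro t
    rw [hγ t]
    exact div_pos hh (mul_pos hL (hdenpos t))
  -- split sum at first term
  have hsplit : ∀ k : ℕ, 1 ≤ k →
      ∑ t ∈ Finset.range k, γ t = γ 0 + ∑ t ∈ Finset.Ico 1 k, γ t := by
    intro k hk
    rw [Finset.range_eq_Ico, Finset.sum_eq_sum_Ico_succ_bot (by omega : 0 < k)]
  ------------------------------------------------------------------
  -- Part 1 : b < 1
  ------------------------------------------------------------------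
  have part1 : b < 1 → ∀ k : ℕ, 1 ≤ k →
      γ 0 + h * (((k : ℝ) + c) ^ (1 - b) - (1 + c) ^ (1 - b)) /
          (L * (a * (1 - a) ^ (-b) + (c + 1) ^ (1 - b)) * (1 - b)) ≤
        ∑ t ∈ Finset.range k, γ t := by
    intro hblt k hk
    set p : ℝ := 1 - b with hp
    have hp0 : 0 < p := by simp [hp]; linarith
    set D : ℝ := a * (1 - a) ^ (-b) + (c + 1) ^ (1 - b) with hD
    have hDpos : 0 < D := by
      have h1 : 0 < a * (1 - a) ^ (-b) := mul_pos ha0 (Real.rpow_pos_of_pos h1a _)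
      have h2 : 0 < (c + 1) ^ (1 - b) := Real.rpow_pos_of_pos hc1 _
      linarith
    set g : ℕ → ℝ := fun t => h / (L * D * p) * ((t : ℝ) + c) ^ p with hg
    -- per-term bound for t ≥ 1
    have hterm : ∀ t : ℕ, 1 ≤ t → g (t + 1) - g t ≤ γ t := by
      intro t ht
      set x : ℝ := (t : ℝ) + c with hxdef
      have hx1 : 1 ≤ x := by
        have : (1:ℝ) ≤ (t:ℝ) := by exact_mod_cast ht
        simp [hxdef]; linarith
      have hx0 : (0:ℝ) < x := lt_of_lt_of_le one_pos hx1
      have hx1c : 1 + c ≤ x := by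
        have : (1:ℝ) ≤ (t:ℝ) := by exact_mod_cast ht
        simp [hxdef]; linarith
      -- denominator bound
      have hden : a * (x / (1 - a)) ^ b + c + 1 ≤ D * x ^ b := by
        have e1 : (x / (1 - a)) ^ b = x ^ b * (1 - a) ^ (-b) := by
          rw [Real.div_rpow hx0.le h1a.le, Real.rpow_neg h1a.le, div_eq_mul_inv]
        have e2 : (c + 1 : ℝ) = (c + 1) ^ (1 - b) * (c + 1) ^ b := by
          rw [← Real.rpow_add hc1]
          norm_num
        have e3 : (c + 1) ^ b ≤ x ^ b := Real.rpow_le_rpow hc1.le (by linarith) hb0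
        have e4 : (c + 1) ^ (1 - b) * (c + 1) ^ b ≤ (c + 1) ^ (1 - b) * x ^ b :=
          mul_le_mul_of_nonneg_left e3 (Real.rpow_nonneg hc1.le _)
        have e5 : (c + 1 : ℝ) ≤ (c + 1) ^ (1 - b) * x ^ b :=
          calc (c + 1 : ℝ) = (c + 1) ^ (1 - b) * (c + 1) ^ b := e2
            _ ≤ (c + 1) ^ (1 - b) * x ^ b := e4
        have e6 : D * x ^ b = a * (x ^ b * (1 - a) ^ (-b)) + (c + 1) ^ (1 - b) * x ^ b := by
          rw [hD]; ring
        rw [e1, e6]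
        linarith
      -- γ t ≥ h / (L * (D * x^b))
      have hγlb : h / (L * (D * x ^ b)) ≤ γ t := by
        rw [hγ t]
        have hd1 : 0 < a * (x / (1 - a)) ^ b + c + 1 := hdenpos t
        apply div_le_div_of_nonneg_left hh.le (mul_pos hL hd1)
        have : a * (x / (1 - a)) ^ b + c + 1 ≤ D * x ^ b := hden
        nlinarith [mul_pos hDpos (Real.rpow_pos_of_pos hx0 b)]
      -- step bound
      have hstep : (x + 1) ^ p - x ^ p ≤ p * x ^ (p - 1) := bern_step hx1 hp0.le (by linarith)
      have hgcast : g (t + 1) - g t = h / (L * D * p) * ((x + 1) ^ p - x ^ p) := by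
        simp only [hg, hxdef]
        push_cast
        ring_nf
      have hcoef : 0 < h / (L * D * p) := by positivity
      have hchain : h / (L * D * p) * ((x + 1) ^ p - x ^ p) ≤ h / (L * (D * x ^ b)) := by
        have h6 : h / (L * D * p) * ((x + 1) ^ p - x ^ p) ≤ h / (L * D * p) * (p * x ^ (p - 1)) :=
          mul_le_mul_of_nonneg_left hstep hcoef.le
        have h7 : h / (L * D * p) * (p * x ^ (p - 1)) = h / (L * (D * x ^ b)) := by
          have hb' : p - 1 = -b := by rw [hp]; ring
          rw [hb', Real.rpow_neg hx0.le]
          have hxb : (0:ℝ) < x ^ b := Real.rpow_pos_of_pos hx0 b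
          field_simp
        rw [h7] at h6; exact h6
      rw [hgcast]
      exact le_trans hchain hγlb
    -- sum it up
    have hsum : g k - g 1 ≤ ∑ t ∈ Finset.Ico 1 k, γ t := by
      rw [← tel_sum g k hk]
      apply Finset.sum_le_sum
      intro t htmem
      exact hterm t (Finset.mem_Ico.mp htmem).1
    have hval : g k - g 1 =
        h * (((k : ℝ) + c) ^ (1 - b) - (1 + c) ^ (1 - b)) / (L * D * (1 - b)) := by
      simp only [hg, ← hp]
      have : ((1:ℕ):ℝ) + c = 1 + c := by norm_num
      rw [this]
      ring
    rw [hsplit k hk]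
    have := hsum
    rw [hval] at this
    linarith
  ------------------------------------------------------------------
  -- Part 2 : b = 1
  ------------------------------------------------------------------
  have part2 : b = 1 → ∀ k : ℕ, 1 ≤ k →
      γ 0 + h * Real.log (((k : ℝ) + c) / (1 + c)) / (L * (a / (1 - a) + 1)) ≤
        ∑ t ∈ Finset.range k, γ t := by
    intro hb1' k hk
    set B : ℝ := a / (1 - a) + 1 with hB
    have hBpos : 0 < B := by
      have h' : 0 < a / (1 - a) := div_pos ha0 h1a
      rw [hB]; linarith
    set g : ℕ → ℝ := fun t => h / (L * B) * Real.log ((t : ℝ) + c) with hg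
    have hterm : ∀ t : ℕ, 1 ≤ t → g (t + 1) - g t ≤ γ t := by
      intro t ht
      set x : ℝ := (t : ℝ) + c with hxdef
      have hx1 : 1 ≤ x := by
        have : (1:ℝ) ≤ (t:ℝ) := by exact_mod_cast ht
        simp [hxdef]; linarith
      have hx0 : (0:ℝ) < x := lt_of_lt_of_le one_pos hx1
      -- denominator bound
      have hden : a * (x / (1 - a)) ^ b + c + 1 ≤ B * x := by
        rw [hb1', Real.rpow_one]
        have e1 : a * (x / (1 - a)) = a / (1 - a) * x := by ring
        have e2 : c + 1 ≤ x := by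
          have : (1:ℝ) ≤ (t:ℝ) := by exact_mod_cast ht
          simp [hxdef]; linarith
        have e3 : B * x = a / (1 - a) * x + x := by rw [hB]; ring
        rw [e1, e3]
        linarith
      have hγlb : h / (L * (B * x)) ≤ γ t := by
        rw [hγ t]
        have hd1 : 0 < a * (x / (1 - a)) ^ b + c + 1 := hdenpos t
        apply div_le_div_of_nonneg_left hh.le (mul_pos hL hd1)
        nlinarith [mul_pos hBpos hx0]
      -- log step bound : log(x+1) - log x ≤ 1/x
      have hlog : Real.log (x + 1) - Real.log x ≤ 1 / x := by
        have h1 : Real.log (x + 1) - Real.log x = Real.log ((x + 1) / x) := by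
          rw [Real.log_div (by linarith) hx0.ne']
        have h2 : Real.log ((x + 1) / x) ≤ (x + 1) / x - 1 :=
          Real.log_le_sub_one_of_pos (by positivity)
        have h3 : (x + 1) / x - 1 = 1 / x := by field_simp; ring
        rw [h1]; linarith [h2, h3.le]
      have hgcast : g (t + 1) - g t = h / (L * B) * (Real.log (x + 1) - Real.log x) := by
        simp only [hg, hxdef]
        push_cast
        ring_nf
      have hcoef : 0 < h / (L * B) := by positivity
      have hchain : h / (L * B) * (Real.log (x + 1) - Real.log x) ≤ h / (L * (B * x)) := by
        have h6 : h / (L * B) * (Real.log (x + 1) - Real.log x) ≤ h / (L * B) * (1 / x) :=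
          mul_le_mul_of_nonneg_left hlog hcoef.le
        have h7 : h / (L * B) * (1 / x) = h / (L * (B * x)) := by
          rw [div_mul_div_comm, mul_one, mul_assoc]
        rw [h7] at h6; exact h6
      rw [hgcast]
      exact le_trans hchain hγlb
    have hsum : g k - g 1 ≤ ∑ t ∈ Finset.Ico 1 k, γ t := by
      rw [← tel_sum g k hk]
      apply Finset.sum_le_sum
      intro t htmem
      exact hterm t (Finset.mem_Ico.mp htmem).1
    have hval : g k - g 1 = h * Real.log (((k : ℝ) + c) / (1 + c)) / (L * B) := by
      simp only [hg]
      have h1 : ((1:ℕ):ℝ) + c = 1 + c := by norm_num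
      rw [h1, Real.log_div (by positivity) (by positivity)]
      ring
    rw [hsplit k hk]
    have := hsum
    rw [hval] at this
    linarith
  refine ⟨part1, part2, ?_⟩
  ------------------------------------------------------------------
  -- Part 3 : existence of C
  ------------------------------------------------------------------
  have hγ0 : 0 < γ 0 := hγpos 0
  by_cases hb1' : b = 1
  · -- b = 1 case
    set B : ℝ := a / (1 - a) + 1 with hB
    have hBpos : 0 < B := by
      have h' : 0 < a / (1 - a) := div_pos ha0 h1a
      rw [hB]; linarith
    set β : ℝ := h / (L * B) with hβ
    have hβpos : 0 < β := by positivity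
    set M : ℝ := Real.log (1 + c) with hM
    have hM0 : 0 ≤ M := Real.log_nonneg (by linarith)
    refine ⟨1 / β + M / γ 0, by positivity, ?_⟩
    intro k hk2
    have hk1 : 1 ≤ k := by omega
    have hS := part2 hb1' k hk1
    set S : ℝ := ∑ t ∈ Finset.range k, γ t with hSdef
    have hk1R : (1:ℝ) ≤ (k:ℝ) := by exact_mod_cast hk1
    have hlogratio : Real.log (((k : ℝ) + c) / (1 + c)) = Real.log ((k:ℝ) + c) - M := by
      rw [Real.log_div (by positivity) (by positivity), hM]
    have hlogk : Real.log (k:ℝ) ≤ Real.log ((k:ℝ) + c) :=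
      Real.log_le_log (by positivity) (by linarith)
    have hratio_nonneg : 0 ≤ Real.log (((k : ℝ) + c) / (1 + c)) :=
      Real.log_nonneg (by rw [le_div_iff₀ (by positivity)]; linarith)
    -- S ≥ γ 0 and S ≥ γ 0 + β * (log k - M)
    have hS1 : γ 0 ≤ S := by
      have : 0 ≤ h * Real.log (((k : ℝ) + c) / (1 + c)) / (L * B) := by positivity
      linarith
    have hS2 : γ 0 + β * (Real.log (k:ℝ) - M) ≤ S := by
      have e : h * Real.log (((k : ℝ) + c) / (1 + c)) / (L * B) =
          β * (Real.log ((k:ℝ) + c) - M) := by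
        rw [hlogratio, hβ]; ring
      rw [e] at hS
      have : β * (Real.log (k:ℝ) - M) ≤ β * (Real.log ((k:ℝ) + c) - M) := by
        apply mul_le_mul_of_nonneg_left _ hβpos.le
        linarith
      linarith
    have hphi : phi b k = Real.log (k:ℝ) := by simp [phi, hb1']
    rw [hphi]
    have c1 : Real.log (k:ℝ) - M ≤ (1 / β) * S := by
      have h1 : β * (Real.log (k:ℝ) - M) ≤ S := by linarith
      calc Real.log (k:ℝ) - M = (1 / β) * (β * (Real.log (k:ℝ) - M)) := by
            field_simp
        _ ≤ (1 / β) * S := mul_le_mul_of_nonneg_left h1 (by positivity)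
    have c2 : M ≤ (M / γ 0) * S := by
      have h1 : M / γ 0 * γ 0 ≤ M / γ 0 * S := mul_le_mul_of_nonneg_left hS1 (by positivity)
      rwa [div_mul_cancel₀ M hγ0.ne'] at h1
    calc Real.log (k:ℝ) = (Real.log (k:ℝ) - M) + M := by ring
      _ ≤ (1 / β) * S + (M / γ 0) * S := add_le_add c1 c2
      _ = (1 / β + M / γ 0) * S := by ring
  · -- b < 1 case
    have hblt : b < 1 := lt_of_le_of_ne hb1 hb1'
    set p : ℝ := 1 - b with hp
    have hp0 : 0 < p := by simp [hp]; linarith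
    set D : ℝ := a * (1 - a) ^ (-b) + (c + 1) ^ (1 - b) with hD
    have hDpos : 0 < D := by
      have h1 : 0 < a * (1 - a) ^ (-b) := mul_pos ha0 (Real.rpow_pos_of_pos h1a _)
      have h2 : 0 < (c + 1) ^ (1 - b) := Real.rpow_pos_of_pos hc1 _
      linarith
    set α : ℝ := h / (L * D * p) with hα
    have hαpos : 0 < α := by positivity
    set M : ℝ := (1 + c) ^ p with hM
    have hM0 : 0 ≤ M := Real.rpow_nonneg (by linarith) _
    refine ⟨1 / α + M / γ 0, by positivity, ?_⟩
    intro k hk2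
    have hk1 : 1 ≤ k := by omega
    have hS := part1 hblt k hk1
    set S : ℝ := ∑ t ∈ Finset.range k, γ t with hSdef
    have hk1R : (1:ℝ) ≤ (k:ℝ) := by exact_mod_cast hk1
    have hkp : (k:ℝ) ^ p ≤ ((k:ℝ) + c) ^ p :=
      Real.rpow_le_rpow (by positivity) (by linarith) hp0.le
    have hMp : M ≤ ((k:ℝ) + c) ^ p :=
      Real.rpow_le_rpow (by linarith) (by linarith) hp0.le
    have e : h * (((k : ℝ) + c) ^ (1 - b) - (1 + c) ^ (1 - b)) /
        (L * (a * (1 - a) ^ (-b) + (c + 1) ^ (1 - b)) * (1 - b)) =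
        α * (((k:ℝ) + c) ^ p - M) := by
      rw [hα, hM, ← hD, ← hp]; ring
    rw [e] at hS
    have hS1 : γ 0 ≤ S := by
      have h0 : 0 ≤ α * (((k:ℝ) + c) ^ p - M) := mul_nonneg hαpos.le (by linarith)
      linarith
    have hS2 : γ 0 + α * ((k:ℝ) ^ p - M) ≤ S := by
      have h0 : α * ((k:ℝ) ^ p - M) ≤ α * (((k:ℝ) + c) ^ p - M) :=
        mul_le_mul_of_nonneg_left (by linarith) hαpos.le
      linarith
    have hphi : phi b k = (k:ℝ) ^ p := by simp [phi, hb1', hp]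
    rw [hphi]
    have c1 : (k:ℝ) ^ p - M ≤ (1 / α) * S := by
      have h1 : α * ((k:ℝ) ^ p - M) ≤ S := by linarith
      calc (k:ℝ) ^ p - M = (1 / α) * (α * ((k:ℝ) ^ p - M)) := by
            field_simp
        _ ≤ (1 / α) * S := mul_le_mul_of_nonneg_left h1 (by positivity)
    have c2 : M ≤ (M / γ 0) * S := by
      have h1 : M / γ 0 * γ 0 ≤ M / γ 0 * S := mul_le_mul_of_nonneg_left hS1 (by positivity)
      rwa [div_mul_cancel₀ M hγ0.ne'] at h1
    calc (k:ℝ) ^ p = ((k:ℝ) ^ p - M) + M := by ring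
      _ ≤ (1 / α) * S + (M / γ 0) * S := add_le_add c1 c2
      _ = (1 / α + M / γ 0) * S := by ring
end
end

section
/- Let a ∈ (0,1), b ∈ [0,1], c ≥ 0. Define the integer sequence (T_t) by T_0 = 0 and T_{t+1} = max{κ ∈ ℕ₀ : κ − (a·κ^b + c) ≤ T_t} + 1 (this maximum exists since κ − a·κ^b − c → +∞), and define the delay sequence τ_k = k − T_t for k ∈ [T_t, T_{t+1}). Then the sequence (T_t) is strictly increasing and (τ_k) is well defined, and for every k ∈ ℕ₀ it satisfies τ_k ≤ min(k, a·k^b + c). -/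
noncomputable section

lemma rpow_sub_le_sub_rpow {b x y : ℝ} (hb0 : 0 ≤ b) (hb1 : b ≤ 1)
    (hx : 0 ≤ x) (hxy : x ≤ y) : y ^ b - x ^ b ≤ (y - x) ^ b := by
  have h2 : 0 ≤ y - x := by linarith
  have key := NNReal.rpow_add_le_add_rpow (Real.toNNReal x) (Real.toNNReal (y - x)) hb0 hb1
  have hsum : Real.toNNReal x + Real.toNNReal (y - x) = Real.toNNReal y := by
    rw [← Real.toNNReal_add hx h2]; ring_nf
  rw [hsum] at key
  have := (NNReal.coe_le_coe).2 key
  push_cast at this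
  rw [Real.coe_toNNReal _ (by linarith : (0:ℝ) ≤ y), Real.coe_toNNReal _ hx,
    Real.coe_toNNReal _ h2] at this
  linarith

lemma f_mono {a b c : ℝ} (ha : a ∈ Set.Ioo (0 : ℝ) 1) (hb : b ∈ Set.Icc (0 : ℝ) 1)
    {m n : ℕ} (hmn : m ≤ n) :
    (m : ℝ) - (a * (m : ℝ) ^ b + c) ≤ (n : ℝ) - (a * (n : ℝ) ^ b + c) := by
  obtain ⟨ha0, ha1⟩ := ha
  obtain ⟨hb0, hb1⟩ := hb
  rcases eq_or_lt_of_le hmn with rfl | hlt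
  · exact le_rfl
  · have hmn' : (m : ℝ) ≤ (n : ℝ) := by exact_mod_cast hmn
    have hd1 : (1 : ℝ) ≤ (n : ℝ) - (m : ℝ) := by
      have : m + 1 ≤ n := hlt
      have : (m : ℝ) + 1 ≤ (n : ℝ) := by exact_mod_cast this
      linarith
    have h1 : (n : ℝ) ^ b - (m : ℝ) ^ b ≤ ((n : ℝ) - (m : ℝ)) ^ b :=
      rpow_sub_le_sub_rpow hb0 hb1 (Nat.cast_nonneg m) hmn'
    have h2 : ((n : ℝ) - (m : ℝ)) ^ b ≤ ((n : ℝ) - (m : ℝ)) ^ (1 : ℝ) :=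
      Real.rpow_le_rpow_of_exponent_le hd1 hb1
    rw [Real.rpow_one] at h2
    have h3 : a * ((n : ℝ) ^ b - (m : ℝ) ^ b) ≤ 1 * ((n : ℝ) - (m : ℝ)) := by
      rcases le_or_gt ((n : ℝ) ^ b - (m : ℝ) ^ b) 0 with h | h
      · nlinarith
      · nlinarith
    nlinarith

/-- the delay sequence `τ_k = k - T_t` for `k ∈ [T_t, T_{t+1})`, where
`T_0 = 0` and `T_{t+1} = max{κ ∈ ℕ₀ : κ - (a κ^b + c) ≤ T_t} + 1`, is well defined
(the sequence `(T_t)` is strictly increasing and the intervals `[T_t, T_{t+1})` cover `ℕ₀`)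
and satisfies `τ_k ≤ min(k, a k^b + c)` for every `k`. -/
theorem delay_sequence_well_defined_and_bounded
    (a b c : ℝ) (ha : a ∈ Set.Ioo (0 : ℝ) 1) (hb : b ∈ Set.Icc (0 : ℝ) 1) (hc : 0 ≤ c)
    (T : ℕ → ℕ) (hT0 : T 0 = 0)
    (hT : ∀ t : ℕ, ∃ M : ℕ,
      IsGreatest {κ : ℕ | (κ : ℝ) - (a * (κ : ℝ) ^ b + c) ≤ (T t : ℝ)} M ∧ T (t + 1) = M + 1)
    (τ : ℕ → ℕ)
    (hτ : ∀ t k : ℕ, T t ≤ k → k < T (t + 1) → τ k = k - T t) :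
    StrictMono T ∧
    (∀ k : ℕ, ∃ t : ℕ, T t ≤ k ∧ k < T (t + 1)) ∧
    (∀ k : ℕ, (τ k : ℝ) ≤ min (k : ℝ) (a * (k : ℝ) ^ b + c)) := by
  have ha0 := ha.1
  have hb0 := hb.1
  have hlt : ∀ t : ℕ, T t < T (t + 1) := by
    intro t
    obtain ⟨M, hM, hEq⟩ := hT t
    have hTt : (T t : ℝ) - (a * (T t : ℝ) ^ b + c) ≤ (T t : ℝ) := by
      have : 0 ≤ a * (T t : ℝ) ^ b + c := by
        have := Real.rpow_nonneg (Nat.cast_nonneg (T t)) b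
        nlinarith
      linarith
    have : T t ≤ M := hM.2 hTt
    omega
  have hmono : StrictMono T := strictMono_nat_of_lt_succ hlt
  have hcover : ∀ k : ℕ, ∃ t : ℕ, T t ≤ k ∧ k < T (t + 1) := by
    intro k
    induction k with
    | zero => exact ⟨0, by omega, by have := hlt 0; omega⟩
    | succ n ih =>
      obtain ⟨t, h1, h2⟩ := ih
      rcases lt_or_ge (n + 1) (T (t + 1)) with h | h
      · exact ⟨t, by omega, h⟩
      · exact ⟨t + 1, h, by have := hlt (t + 1); omega⟩
  refine ⟨hmono, hcover, ?_⟩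
  intro k
  obtain ⟨t, h1, h2⟩ := hcover k
  obtain ⟨M, hM, hEq⟩ := hT t
  have hτk : τ k = k - T t := hτ t k h1 h2
  have hcast : (τ k : ℝ) = (k : ℝ) - (T t : ℝ) := by
    rw [hτk]; push_cast [h1]; ring
  have hkM : k ≤ M := by omega
  have hfk : (k : ℝ) - (a * (k : ℝ) ^ b + c) ≤ (T t : ℝ) :=
    le_trans (f_mono ha hb hkM) hM.1
  refine le_min ?_ ?_
  · rw [hcast]
    have : (0 : ℝ) ≤ (T t : ℝ) := Nat.cast_nonneg _
    linarith
  · rw [hcast]; linarith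
end
end

section
/- Let a ∈ (0,1), b ∈ [0,1), c ≥ 0 and set η = a·(1−b)·2^{−b/(1−b)}. Let (T_t)_{t≥0} be a real sequence with T_0 = 0, T_1 ≥ 1, and T_{t+1} ≥ T_t + a·T_t^b + c for all t ≥ 1. Then T_t ≥ (η·t)^{1/(1−b)} for every t ∈ ℕ₀. -/
noncomputable section

private lemma delay_step_ineq (x p : ℝ) (hx : 1 ≤ x) (hp : 1 ≤ p) :
    (x + 1) ^ p ≤ x ^ p + p * (2 * x) ^ (p - 1) := by
  have hx1 : (0:ℝ) < x + 1 := by linarith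
  have hz : (-1:ℝ) ≤ -(1/(x+1)) := by
    have h1 : 1/(x+1) ≤ 1 := by rw [div_le_one hx1]; linarith
    linarith
  have h := one_add_mul_self_le_rpow_one_add hz hp
  have e : 1 + -(1/(x+1)) = x/(x+1) := by field_simp; ring
  rw [e, Real.div_rpow (by linarith) hx1.le] at h
  have hpow : (0:ℝ) < (x+1)^p := Real.rpow_pos_of_pos hx1 p
  have h2 : (1 + p * -(1/(x+1))) * (x+1)^p ≤ x^p := by
    rw [← le_div_iff₀ hpow]; exact h
  have e2 : (x+1)^(p-1) = (x+1)^p / (x+1) := by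
    rw [Real.rpow_sub hx1, Real.rpow_one]
  have h3 : (x+1)^p - p*(x+1)^(p-1) ≤ x^p := by
    have e3 : (1 + p * -(1/(x+1))) * (x+1)^p = (x+1)^p - p*((x+1)^p/(x+1)) := by
      field_simp; ring
    rw [e3, ← e2] at h2
    exact h2
  have h4 : (x+1)^(p-1) ≤ (2*x)^(p-1) :=
    Real.rpow_le_rpow hx1.le (by linarith) (by linarith)
  nlinarith [mul_le_mul_of_nonneg_left h4 (le_trans zero_le_one hp)]

/-- if `T_0 = 0`, `T_1 ≥ 1` and `T_{t+1} ≥ T_t + a T_t^b + c` for `t ≥ 1`,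
then `T_t ≥ (η t)^{1/(1-b)}` for all `t`, where `η = a (1-b) 2^{-b/(1-b)}`. -/
theorem delay_sequence_polynomial_lower_bound
    (a b c : ℝ) (ha : a ∈ Set.Ioo (0 : ℝ) 1) (hb : b ∈ Set.Ico (0 : ℝ) 1) (hc : 0 ≤ c)
    (η : ℝ) (hη : η = a * (1 - b) * (2 : ℝ) ^ (-(b / (1 - b))))
    (T : ℕ → ℝ) (hT0 : T 0 = 0) (hT1 : 1 ≤ T 1)
    (hT : ∀ t : ℕ, 1 ≤ t → T t + a * T t ^ b + c ≤ T (t + 1)) :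
    ∀ t : ℕ, (η * t) ^ (1 / (1 - b)) ≤ T t := by
  obtain ⟨ha0, ha1⟩ := ha
  obtain ⟨hb0, hb1⟩ := hb
  have h1b : (0:ℝ) < 1 - b := by linarith
  set α : ℝ := 1 / (1 - b) with hαdef
  have hαpos : 0 < α := by positivity
  have hα1 : 1 ≤ α := by
    rw [hαdef, le_div_iff₀ h1b]; linarith
  have hab : b / (1 - b) = α - 1 := by
    rw [hαdef]; field_simp; ring
  have hαb : α * b = α - 1 := by
    rw [hαdef]; field_simp; ring
  have hηpos : 0 < η := by
    rw [hη]
    exact mul_pos (mul_pos ha0 h1b) (Real.rpow_pos_of_pos two_pos _)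
  have h2le1 : (2:ℝ) ^ (-(b/(1-b))) ≤ 1 :=
    Real.rpow_le_one_of_one_le_of_nonpos one_le_two
      (neg_nonpos.mpr (div_nonneg hb0 h1b.le))
  have h2pos : (0:ℝ) < (2:ℝ) ^ (-(b/(1-b))) := Real.rpow_pos_of_pos two_pos _
  have hη1 : η ≤ 1 := by
    rw [hη]
    have hab1 : a * (1-b) ≤ 1 := by nlinarith
    nlinarith [mul_le_mul_of_nonneg_left h2le1 (mul_pos ha0 h1b).le]
  have hα1b : α * (1 - b) = 1 := by
    rw [hαdef]; field_simp
  have h2ne : (2:ℝ)^(α-1) * (2:ℝ)^(-(α-1)) = 1 := by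
    rw [← Real.rpow_add two_pos]; simp
  have key : α * (2:ℝ)^(α-1) * η = a := by
    rw [hη, hab]
    linear_combination a * (α * (1 - b)) * h2ne + a * hα1b
  intro t
  induction t with
  | zero =>
    rw [hT0, Nat.cast_zero, mul_zero, Real.zero_rpow hαpos.ne']
  | succ t ih =>
    rcases Nat.eq_zero_or_pos t with rfl | ht
    · have : (η * (1:ℝ)) ^ α ≤ 1 := by
        rw [mul_one]
        exact Real.rpow_le_one hηpos.le hη1 hαpos.le
      push_cast
      linarith
    · have hx1 : (1:ℝ) ≤ (t:ℝ) := Nat.one_le_cast.mpr ht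
      have hxnn : (0:ℝ) ≤ (t:ℝ) := by linarith
      have hηtnn : (0:ℝ) ≤ η * (t:ℝ) := mul_nonneg hηpos.le hxnn
      have hstep := delay_step_ineq (t:ℝ) α hx1 hα1
      have hηα : η ^ α = η * η ^ (α - 1) := by
        nth_rewrite 2 [← Real.rpow_one η]
        rw [← Real.rpow_add hηpos]; ring_nf
      have e1 : (η * ((t:ℝ)+1)) ^ α = η ^ α * ((t:ℝ)+1) ^ α :=
        Real.mul_rpow hηpos.le (by linarith)
      have e2 : η ^ α * (t:ℝ) ^ α = (η * (t:ℝ)) ^ α :=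
        (Real.mul_rpow hηpos.le hxnn).symm
      have e3 : α * η ^ α * (2*(t:ℝ))^(α-1) = a * (η*(t:ℝ))^(α-1) := by
        rw [Real.mul_rpow two_pos.le hxnn, Real.mul_rpow hηpos.le hxnn, hηα]
        linear_combination (η^(α-1) * (t:ℝ)^(α-1)) * key
      have main : (η * ((t:ℝ)+1)) ^ α ≤ (η*(t:ℝ))^α + a * (η*(t:ℝ))^(α*b) := by
        rw [hαb, e1]
        calc η ^ α * ((t:ℝ)+1) ^ α
            ≤ η ^ α * ((t:ℝ)^α + α*(2*(t:ℝ))^(α-1)) :=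
              mul_le_mul_of_nonneg_left hstep (Real.rpow_nonneg hηpos.le α)
          _ = (η*(t:ℝ))^α + a * (η*(t:ℝ))^(α-1) := by
              rw [mul_add, e2, ← e3]; ring
      have hpow : (η*(t:ℝ))^(α*b) ≤ (T t) ^ b := by
        rw [Real.rpow_mul hηtnn]
        exact Real.rpow_le_rpow (Real.rpow_nonneg hηtnn α) ih hb0
      have hmul : a * (η*(t:ℝ))^(α*b) ≤ a * (T t) ^ b :=
        mul_le_mul_of_nonneg_left hpow ha0.le
      have hstep2 := hT t ht
      have : (η * ((t:ℝ)+1)) ^ α ≤ T (t+1) := by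
        calc (η * ((t:ℝ)+1)) ^ α ≤ (η*(t:ℝ))^α + a * (η*(t:ℝ))^(α*b) := main
          _ ≤ T t + a * (T t) ^ b + c := by linarith
          _ ≤ T (t+1) := hstep2
      push_cast
      exact this
end
end

section
/- Let a ∈ (0,1), b ∈ [0,1) and set η = a·(1−b)·2^{−b/(1−b)}. Then for every real t ≥ 1, 1 + a/(η·t) − (1 + 1/t)^{1/(1−b)} ≥ 0; equivalently, (1 + 1/t)^{1/(1−b)} ≤ 1 + 2^{b/(1−b)}/((1−b)·t). -/
noncomputable section

open Set

lemma rpow_aux (p : ℝ) (hp : 1 ≤ p) (x : ℝ) (hx0 : 0 < x) (hx1 : x ≤ 1) :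
    (1 + x) ^ p ≤ 1 + p * (2 : ℝ) ^ (p - 1) * x := by
  have hab : (1 : ℝ) < 1 + x := by linarith
  obtain ⟨c, hc, hderiv⟩ := exists_deriv_eq_slope (fun y : ℝ => y ^ p) hab
    (by
      apply ContinuousOn.rpow_const continuousOn_id
      intro y hy
      exact Or.inl (by simp at hy ⊢; nlinarith [hy.1]))
    (by
      intro y hy
      have hy0 : y ≠ 0 := by simp at hy ⊢; nlinarith [hy.1]
      exact (Real.differentiableAt_rpow_const_of_ne p hy0).differentiableWithinAt)
  have hc1 : 1 < c := hc.1
  have hc2 : c ≤ 2 := by linarith [hc.2]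
  have hd : deriv (fun y : ℝ => y ^ p) c = p * c ^ (p - 1) :=
    Real.deriv_rpow_const c p
  have hcp : c ^ (p - 1) ≤ (2 : ℝ) ^ (p - 1) :=
    Real.rpow_le_rpow (by linarith) hc2 (by linarith)
  have hslope : ((1 + x) ^ p - (1 : ℝ) ^ p) / (1 + x - 1) = p * c ^ (p - 1) := by
    rw [← hd, hderiv]
  rw [Real.one_rpow] at hslope
  have hx' : 1 + x - 1 = x := by ring
  rw [hx'] at hslope
  have h1 : (1 + x) ^ p - 1 = p * c ^ (p - 1) * x := by
    field_simp at hslope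
    linarith [hslope]
  have hp2 : p * c ^ (p - 1) * x ≤ p * (2 : ℝ) ^ (p - 1) * x := by
    apply mul_le_mul_of_nonneg_right _ hx0.le
    exact mul_le_mul_of_nonneg_left hcp (by linarith)
  linarith

/-- for `a ∈ (0,1)`, `b ∈ [0,1)` and `η = a (1-b) 2^{-b/(1-b)}`, every real
`t ≥ 1` satisfies `1 + a/(η t) - (1 + 1/t)^{1/(1-b)} ≥ 0`, equivalently
`(1 + 1/t)^{1/(1-b)} ≤ 1 + 2^{b/(1-b)}/((1-b) t)`. -/
theorem induction_step_inequality
    (a b : ℝ) (ha : a ∈ Set.Ioo (0 : ℝ) 1) (hb : b ∈ Set.Ico (0 : ℝ) 1)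
    (η : ℝ) (hη : η = a * (1 - b) * (2 : ℝ) ^ (-(b / (1 - b)))) :
    ∀ t : ℝ, 1 ≤ t →
      0 ≤ 1 + a / (η * t) - (1 + 1 / t) ^ (1 / (1 - b)) ∧
      (1 + 1 / t) ^ (1 / (1 - b)) ≤ 1 + (2 : ℝ) ^ (b / (1 - b)) / ((1 - b) * t) := by
  intro t ht
  have hb0 : 0 ≤ b := hb.1
  have hb1 : 0 < 1 - b := by linarith [hb.2]
  set p : ℝ := 1 / (1 - b) with hpdef
  have hp1 : 1 ≤ p := by
    rw [hpdef, le_div_iff₀ hb1]; linarith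
  have hpm1 : p - 1 = b / (1 - b) := by
    rw [hpdef]; field_simp; ring
  have ht0 : 0 < t := by linarith
  have hx0 : 0 < 1 / t := by positivity
  have hx1 : 1 / t ≤ 1 := by rw [div_le_one ht0]; exact ht
  have key := rpow_aux p hp1 (1 / t) hx0 hx1
  have hpos2 : (0 : ℝ) < (2 : ℝ) ^ (b / (1 - b)) := Real.rpow_pos_of_pos (by norm_num) _
  have heq : p * (2 : ℝ) ^ (p - 1) * (1 / t) = (2 : ℝ) ^ (b / (1 - b)) / ((1 - b) * t) := by
    rw [hpm1, hpdef]
    field_simp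
  have hmain : (1 + 1 / t) ^ p ≤ 1 + (2 : ℝ) ^ (b / (1 - b)) / ((1 - b) * t) := by
    rw [← heq]; linarith
  constructor
  · have ha0 : 0 < a := ha.1
    have haeq : a / (η * t) = (2 : ℝ) ^ (b / (1 - b)) / ((1 - b) * t) := by
      rw [hη, Real.rpow_neg (by norm_num : (0:ℝ) ≤ 2)]
      rw [div_eq_div_iff (by positivity) (by positivity)]
      field_simp
    rw [haeq]
    linarith
  · exact hmain
end
end

section
/- Let a ∈ (0,1), b ∈ [0,1], c ≥ 0 and define T_0 = 0 and T_{t+1} = max{κ ∈ ℕ₀ : κ − (a·κ^b + c) ≤ T_t} + 1 for all t ≥ 0. Then there is a constant C > 0 such that for every integer k ≥ 2, max{t ∈ ℕ₀ : T_t ≤ k−1} + 1 ≤ C·φ(k), where φ(k) = k^{1−b} if b ∈ [0,1) and φ(k) = ln k if b = 1. -/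
noncomputable section

/-- equation (10) of the paper: for the sequence `T_0 = 0`,
`T_{t+1} = max{κ ∈ ℕ₀ : κ - (a κ^b + c) ≤ T_t} + 1`, there is `C > 0` such that
`max{t ∈ ℕ₀ : T_t ≤ k-1} + 1 ≤ C φ(k)` for every integer `k ≥ 2`
(equivalently: every `t` with `T_t ≤ k-1` satisfies `t + 1 ≤ C φ(k)`). -/
theorem number_of_epochs_bound
    (a b c : ℝ) (ha : a ∈ Set.Ioo (0 : ℝ) 1) (hb : b ∈ Set.Icc (0 : ℝ) 1) (hc : 0 ≤ c)
    (T : ℕ → ℕ) (hT0 : T 0 = 0)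
    (hT : ∀ t : ℕ, ∃ M : ℕ,
      IsGreatest {κ : ℕ | (κ : ℝ) - (a * (κ : ℝ) ^ b + c) ≤ (T t : ℝ)} M ∧ T (t + 1) = M + 1) :
    ∃ C > (0 : ℝ), ∀ k : ℕ, 2 ≤ k → ∀ t : ℕ, T t ≤ k - 1 → (t : ℝ) + 1 ≤ C * phi b k := by
  obtain ⟨ha0, ha1⟩ := ha
  obtain ⟨hb0, hb1⟩ := hb
  -- key recurrence facts
  have key : ∀ t : ℕ, (T t : ℝ) + a * (T (t+1) : ℝ) ^ b + c < (T (t+1) : ℝ) ∧ T t < T (t+1) := by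
    intro t
    obtain ⟨M, ⟨⟨hMmem, hMub⟩, hM1⟩⟩ := hT t
    have hTtM : T t ≤ M := by
      apply hMub
      have h0 : (0:ℝ) ≤ a * (T t : ℝ) ^ b + c := by positivity
      simp only [Set.mem_setOf_eq]
      linarith
    have hnot : ¬ ((M+1 : ℕ) ∈ {κ : ℕ | (κ : ℝ) - (a * (κ : ℝ) ^ b + c) ≤ (T t : ℝ)}) := by
      intro h
      have := hMub h
      omega
    simp only [Set.mem_setOf_eq, not_le] at hnot
    constructor
    · rw [hM1]
      push_cast
      push_cast at hnot
      linarith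
    · omega
  have hmono : ∀ t, t ≤ T t := by
    intro t
    induction t with
    | zero => simp
    | succ n ih => have := (key n).2; omega
  by_cases hb1' : b = 1
  · -- logarithmic case
    subst hb1'
    set r : ℝ := (1 - a)⁻¹ with hr
    have h1a : (0:ℝ) < 1 - a := by linarith
    have hr1 : 1 < r := (one_lt_inv₀ h1a).mpr (by linarith)
    have hLr : 0 < Real.log r := Real.log_pos hr1
    have hL2 : 0 < Real.log 2 := Real.log_pos (by norm_num)
    refine ⟨1 / Real.log r + 2 / Real.log 2, by positivity, ?_⟩
    intro k hk t hTt
    have hk1 : (T t : ℝ) ≤ (k : ℝ) - 1 := by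
      have : (T t : ℝ) ≤ ((k - 1 : ℕ) : ℝ) := Nat.cast_le.mpr hTt
      rwa [Nat.cast_sub (by omega), Nat.cast_one] at this
    have hlogk : Real.log 2 ≤ Real.log k := by
      apply Real.log_le_log (by norm_num)
      exact_mod_cast hk
    -- growth lemma: r^s ≤ T (s+1)
    have grow : ∀ s : ℕ, r ^ s ≤ (T (s+1) : ℝ) := by
      intro s
      induction s with
      | zero =>
        simpa using (by exact_mod_cast hmono 1 : (1:ℝ) ≤ (T 1 : ℝ))
      | succ n ih =>
        have hk' := (key (n+1)).1
        have hrec : (T (n+1) : ℝ) < (1 - a) * (T (n+2) : ℝ) := by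
          rw [Real.rpow_one] at hk'
          linarith
        have : r * (T (n+1) : ℝ) < (T (n+2) : ℝ) := by
          rw [hr]
          rw [inv_mul_lt_iff₀ h1a]
          exact hrec
        calc r ^ (n+1) = r * r ^ n := by ring
          _ ≤ r * (T (n+1) : ℝ) := by
              apply mul_le_mul_of_nonneg_left ih (by linarith)
          _ ≤ (T (n+2) : ℝ) := this.le
    have hphi : phi 1 k = Real.log k := by simp [phi]
    rw [hphi]
    rcases Nat.eq_zero_or_pos t with ht0 | ht0
    · subst ht0
      have h2 : (2:ℝ) ≤ (2 / Real.log 2) * Real.log k := by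
        rw [div_mul_eq_mul_div, le_div_iff₀ hL2]
        linarith
      have h1 : (0:ℝ) ≤ (1 / Real.log r) * Real.log k := by positivity
      push_cast
      linarith
    · obtain ⟨s, rfl⟩ : ∃ s, t = s + 1 := ⟨t - 1, by omega⟩
      have hgs : r ^ s ≤ (k : ℝ) := le_trans (le_trans (grow s) hk1) (by linarith)
      have hlog : (s : ℝ) * Real.log r ≤ Real.log k := by
        have := Real.log_le_log (by positivity) hgs
        rwa [Real.log_pow] at this
      have h1 : (s : ℝ) ≤ (1 / Real.log r) * Real.log k := by
        rw [div_mul_eq_mul_div, le_div_iff₀ hLr]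
        linarith
      have h2 : (2:ℝ) ≤ (2 / Real.log 2) * Real.log k := by
        rw [div_mul_eq_mul_div, le_div_iff₀ hL2]
        linarith
      push_cast
      linarith
  · -- polynomial case
    have hblt : b < 1 := lt_of_le_of_ne hb1 hb1'
    set p : ℝ := 1 - b with hp
    have hp0 : 0 < p := by rw [hp]; linarith
    have hp1 : p ≤ 1 := by rw [hp]; linarith
    -- key step: (T t)^p + a*p ≤ (T (t+1))^p
    have step : ∀ t : ℕ, (T t : ℝ) ^ p + a * p ≤ (T (t+1) : ℝ) ^ p := by
      intro t
      set x : ℝ := (T t : ℝ) with hx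
      set y : ℝ := (T (t+1) : ℝ) with hy
      have hx0 : 0 ≤ x := Nat.cast_nonneg _
      have hy1' : 1 ≤ T (t+1) := lt_of_le_of_lt (Nat.zero_le _) (key t).2
      have hy1 : (1:ℝ) ≤ y := by rw [hy]; exact_mod_cast hy1'
      have hy0 : (0:ℝ) < y := by linarith
      have hxy : x + a * y ^ b ≤ y := by have := (key t).1; linarith
      -- AM-GM: (x/y)^p ≤ p*(x/y) + (1-p)
      have amgm := Real.geom_mean_le_arith_mean2_weighted hp0.le (by linarith : (0:ℝ) ≤ 1 - p)
        (div_nonneg hx0 hy0.le) zero_le_one (by ring)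
      rw [Real.one_rpow, mul_one, mul_one] at amgm
      have hdiv : (x / y) ^ p = x ^ p / y ^ p := Real.div_rpow hx0 hy0.le p
      have hyp0 : (0:ℝ) < y ^ p := Real.rpow_pos_of_pos hy0 p
      have hypm1 : (0:ℝ) < y ^ (p - 1) := Real.rpow_pos_of_pos hy0 _
      -- x^p ≤ p*x*y^(p-1) + (1-p)*y^p
      have hmain : x ^ p ≤ p * x * y ^ (p-1) + (1-p) * y ^ p := by
        have h1 : x ^ p ≤ (p * (x/y) + (1 - p)) * y ^ p := by
          calc x ^ p = x ^ p / y ^ p * y ^ p := (div_mul_cancel₀ _ hyp0.ne').symm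
            _ = (x/y)^p * y^p := by rw [hdiv]
            _ ≤ (p * (x/y) + (1 - p)) * y ^ p :=
                mul_le_mul_of_nonneg_right amgm hyp0.le
        have h2 : (x/y) * y ^ p = x * y ^ (p-1) := by
          rw [Real.rpow_sub hy0 p 1, Real.rpow_one]
          ring
        calc x ^ p ≤ (p * (x/y) + (1 - p)) * y ^ p := h1
          _ = p * ((x/y) * y ^ p) + (1-p) * y ^ p := by ring
          _ = p * x * y ^ (p-1) + (1-p) * y ^ p := by rw [h2]; ring
      -- y^b * y^(p-1) = 1 and y^(p-1) * y = y^p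
      have e1 : y ^ b * y ^ (p - 1) = 1 := by
        rw [← Real.rpow_add hy0, show b + (p - 1) = 0 by rw [hp]; ring, Real.rpow_zero]
      have e2 : y ^ (p - 1) * y = y ^ p := by
        nth_rewrite 2 [← Real.rpow_one y]
        rw [← Real.rpow_add hy0, show p - 1 + 1 = p by ring]
      -- from x + a*y^b ≤ y : (x + a*y^b) * y^(p-1) ≤ y^p
      have h3 : x * y ^ (p-1) + a ≤ y ^ p := by
        have := mul_le_mul_of_nonneg_right hxy hypm1.le
        calc x * y ^ (p-1) + a = (x + a * y ^ b) * y ^ (p-1) := by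
              rw [add_mul, mul_assoc, e1, mul_one]
          _ ≤ y * y ^ (p-1) := this
          _ = y ^ p := by rw [mul_comm]; exact e2
      nlinarith [hmain, h3, hp0]
    have lower : ∀ t : ℕ, a * p * t ≤ (T t : ℝ) ^ p := by
      intro t
      induction t with
      | zero => simp [hT0, Real.zero_rpow hp0.ne']
      | succ n ih =>
        have := step n
        push_cast
        linarith
    refine ⟨1 / (a * p) + 1, by positivity, ?_⟩
    intro k hk t hTt
    have hk1 : (T t : ℝ) ≤ (k : ℝ) := by
      have : (T t : ℝ) ≤ ((k - 1 : ℕ) : ℝ) := Nat.cast_le.mpr hTt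
      have h2 : ((k - 1 : ℕ) : ℝ) ≤ (k : ℝ) := by exact_mod_cast Nat.sub_le k 1
      linarith
    have hphi : phi b k = (k : ℝ) ^ p := by simp [phi, hb1', hp]
    rw [hphi]
    have hTp : (T t : ℝ) ^ p ≤ (k : ℝ) ^ p :=
      Real.rpow_le_rpow (Nat.cast_nonneg _) hk1 hp0.le
    have hkp1 : (1:ℝ) ≤ (k : ℝ) ^ p := Real.one_le_rpow (by exact_mod_cast by omega : (1:ℝ) ≤ k) hp0.le
    have ht : a * p * t ≤ (k : ℝ) ^ p := le_trans (lower t) hTp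
    have hap : 0 < a * p := by positivity
    have h1 : (t : ℝ) ≤ (1 / (a * p)) * (k : ℝ) ^ p := by
      rw [div_mul_eq_mul_div, le_div_iff₀ hap]
      linarith
    linarith [h1, hkp1]
end
end
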